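/- If the vector of functionals satisfies the evolution equation (dU/dt)(B) = U(zB) − U(B) U(z P_0) for all B ∈ (ℂ[z])², then each vector polynomial B_n of the associated family satisfies Ḃ_n(z) = −C_n B_{n-1}(z) − D_n B_n(z), where D_n = [[0,0],[b_{2n+1},0]] and C_n = [[c_{2n-1}, b_{2n}],[0, c_{2n}]]. -/

import Mathlib

open Polynomial Matrix

noncomputable section

/-- Auxiliary shifted sequence: `Paux (n+2) = P_n`. -/
def Paux (a b c : ℕ → ℂ) : ℕ → Polynomial ℂ
  | 0 => 0
  | 1 => 0
  | 2 => 1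
  | n + 3 =>
      (X - C (a (n + 1))) * Paux a b c (n + 2)
        - C (b n) * Paux a b c (n + 1) - C (c (n - 1)) * Paux a b c n

/-- The polynomials `P_n` of the four-term recurrence. -/
def Pp (a b c : ℕ → ℂ) (n : ℕ) : Polynomial ℂ := Paux a b c (n + 2)

/-- The vector polynomials `B_m = (P_{2m}, P_{2m+1})ᵀ`. -/
def Bv (a b c : ℕ → ℂ) (m : ℕ) : Fin 2 → Polynomial ℂ :=
  ![Pp a b c (2 * m), Pp a b c (2 * m + 1)]

/-- The time-dependent vector polynomials `B_m(·, t)`. -/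
def Bvt (a b c : ℕ → ℝ → ℂ) (t : ℝ) (m : ℕ) : Fin 2 → Polynomial ℂ :=
  Bv (fun n => a n t) (fun n => b n t) (fun n => c n t) m

/-- `B_{k-1}(·, t)`, with the convention `B_{-1} = 0`. -/
def Bvtprev (a b c : ℕ → ℝ → ℂ) (t : ℝ) : ℕ → Fin 2 → Polynomial ℂ
  | 0 => 0
  | m + 1 => Bvt a b c t m

/-- The block `C_n(t)`, with `C_0 = [[1,0],[−a_1,1]]`. -/
def Cblk (a b c : ℕ → ℝ → ℂ) (n : ℕ) (t : ℝ) : Matrix (Fin 2) (Fin 2) ℂ :=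
  if n = 0 then !![1, 0; -(a 1 t), 1]
  else !![c (2 * n - 1) t, b (2 * n) t; 0, c (2 * n) t]

/-- The product `C_m(t) C_{m-1}(t) ⋯ C_0(t)`. -/
def Cprod (a b c : ℕ → ℝ → ℂ) (t : ℝ) : ℕ → Matrix (Fin 2) (Fin 2) ℂ
  | 0 => Cblk a b c 0 t
  | m + 1 => Cblk a b c (m + 1) t * Cprod a b c t m

/-- The block `D_n(t) = [[0,0],[b_{2n+1},0]]`. -/
def Dblk (b : ℕ → ℝ → ℂ) (n : ℕ) (t : ℝ) : Matrix (Fin 2) (Fin 2) ℂ :=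
  !![0, 0; b (2 * n + 1) t, 0]

/-- The vector `P₀(z) = (1, z)ᵀ`. -/
def P0vec : Fin 2 → Polynomial ℂ := ![1, X]

/-!
Both sides are compared through moment functionals. Because `U (A Q) = A U(Q)`, the matrix `U(Q)`
has rows `W(Q₀), W(Q₁)` for the single row functional `W p = U(p, 0)₀`, and the moment blocks of
`W` against `(P_{2m}, P_{2m+1})` are the invertible products `C_m ⋯ C_0`. By block triangularity a
polynomial of degree `< 2n` killed by `W(zʲ ·)`, `j < n`, is zero; in degree `2n` one more test is
needed, by the scalar functional `ν = W · (1, a₁)`, which kills `zⁿ P_{2n+1}` but not `zⁿ P_{2n}`.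

The coefficients of `P_M` are differentiable, so `Ṗ_M` exists, and `Ṗ_M - Ptail M` has degree
`< M`. Differentiating `W(zʲ P_M) = 0` along the flow and rewriting `z P_M` by the recurrence shows
that `Ṗ_M - Ptail M` passes all the `W` tests; for odd `M = 2n + 1` it passes the `ν` test too,
because `ȧ₁ = b₁` makes `(1, a₁)` an eigenvector of `U(z P₀) - d/dt`, so that `ν` evolves by the
scalar law `ν̇(p) = ν(z p) - a₁ ν(p)`.
-/

section Recurrence

variable (a b c : ℕ → ℂ)

/-- In the paper's indexing (`Paux a b c (M + 2) = P_M`) this is `-b_M P_{M-1} - c_{M-1} P_{M-2}`,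
the lower part of the recurrence for `P_{M+1}`; the theorem says that it is also `Ṗ_M`. -/
def Ptail (M : ℕ) : ℂ[X] :=
  -(C (b M) * Paux a b c (M + 1)) - C (c (M - 1)) * Paux a b c M

variable {a b c}

theorem Paux_add_three (M : ℕ) :
    Paux a b c (M + 3) = (X - C (a (M + 1))) * Paux a b c (M + 2) + Ptail a b c M := by
  rw [Paux, Ptail]
  ring

theorem coeff_Paux_of_lt : ∀ {M k : ℕ}, M < k + 2 → (Paux a b c M).coeff k = 0
  | 0, _, _ => by simp [Paux]
  | 1, _, _ => by simp [Paux]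
  | 2, k, h => by simp [Paux, coeff_one, show k ≠ 0 by omega]
  | M + 3, 0, h => by omega
  | M + 3, k + 1, h => by
    simp only [Paux_add_three, Ptail, sub_mul, coeff_add, coeff_sub, coeff_neg, coeff_X_mul,
      coeff_C_mul, coeff_Paux_of_lt (M := M + 2) (k := k) (by omega),
      coeff_Paux_of_lt (M := M + 2) (k := k + 1) (by omega),
      coeff_Paux_of_lt (M := M + 1) (k := k + 1) (by omega),
      coeff_Paux_of_lt (M := M) (k := k + 1) (by omega)]
    simp

theorem coeff_Paux_add_two_self {M : ℕ} : (Paux a b c (M + 2)).coeff M = 1 := by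
  induction M with
  | zero => simp [Paux]
  | succ M ih =>
    simp only [Paux_add_three, Ptail, sub_mul, coeff_add, coeff_sub, coeff_neg, coeff_X_mul,
      coeff_C_mul, ih, coeff_Paux_of_lt (show M + 2 < M + 1 + 2 by omega),
      coeff_Paux_of_lt (show M + 1 < M + 1 + 2 by omega),
      coeff_Paux_of_lt (show M < M + 1 + 2 by omega)]
    simp

theorem coeff_Ptail_of_le {M k : ℕ} (h : M ≤ k) : (Ptail a b c M).coeff k = 0 := by
  simp [Ptail, coeff_Paux_of_lt (show M + 1 < k + 2 by omega),
    coeff_Paux_of_lt (show M < k + 2 by omega)]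

theorem natDegree_Paux_le {M : ℕ} : (Paux a b c (M + 2)).natDegree ≤ M :=
  natDegree_le_iff_coeff_eq_zero.2 fun _ hk => coeff_Paux_of_lt (by omega)

theorem monic_Paux (M : ℕ) : (Paux a b c (M + 2)).Monic :=
  monic_of_natDegree_le_of_coeff_eq_one M natDegree_Paux_le coeff_Paux_add_two_self

theorem natDegree_Paux (M : ℕ) : (Paux a b c (M + 2)).natDegree = M :=
  natDegree_eq_of_le_of_coeff_ne_zero natDegree_Paux_le (by simp [coeff_Paux_add_two_self])

end Recurrence

section Uniqueness

variable {K : Type*} [Field K]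

theorem degree_sub_C_coeff_mul_lt {p q : K[X]} {d : ℕ} (hq : q.Monic) (hqd : q.natDegree = d)
    (hp : p.degree < d + 1) : (p - C (p.coeff d) * q).degree < d := by
  refine (degree_lt_iff_coeff_zero _ _).2 fun k hk => ?_
  rcases (Nat.cast_le.1 hk).eq_or_lt with rfl | hlt
  · simp [← hqd, hq.coeff_natDegree]
  · have hpk : p.coeff k = 0 :=
      coeff_eq_zero_of_degree_lt (hp.trans_le (by exact_mod_cast hlt))
    have hqk : q.coeff k = 0 := coeff_eq_zero_of_natDegree_lt (hqd ▸ hlt)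
    simp [hpk, hqk]

variable (W : K[X] →ₗ[K] (Fin 2 → K)) {P : ℕ → K[X]}

def momentBlock (P : ℕ → K[X]) (m : ℕ) : Matrix (Fin 2) (Fin 2) K :=
  Matrix.of ![W (X ^ m * P (2 * m)), W (X ^ m * P (2 * m + 1))]

theorem eq_zero_of_degree_lt_of_moments_eq_zero
    (hP : ∀ M, (P M).Monic ∧ (P M).natDegree = M)
    (horth : ∀ j M, 2 * (j + 1) ≤ M → W (X ^ j * P M) = 0)
    (hdet : ∀ m, (momentBlock W P m).det ≠ 0) :
    ∀ n (p : K[X]), p.degree < ((2 * n : ℕ) : WithBot ℕ) → (∀ j < n, W (X ^ j * p) = 0) → p = 0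
  | 0, p, hp, _ => by simpa using hp
  | n + 1, p, hp, hW => by
    set β := p.coeff (2 * n + 1)
    set α := (p - C β * P (2 * n + 1)).coeff (2 * n)
    set r := p - C β * P (2 * n + 1) - C α * P (2 * n)
    have hr : r.degree < ((2 * n : ℕ) : WithBot ℕ) :=
      degree_sub_C_coeff_mul_lt (hP _).1 (hP _).2 <|
        degree_sub_C_coeff_mul_lt (hP _).1 (hP _).2 (by push_cast at hp ⊢; exact hp)
    have hp_eq : p = r + C α * P (2 * n) + C β * P (2 * n + 1) := by ring
    have hW_split (j : ℕ) : W (X ^ j * p)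
        = W (X ^ j * r) + α • W (X ^ j * P (2 * n)) + β • W (X ^ j * P (2 * n + 1)) := by
      rw [hp_eq, ← smul_eq_C_mul, ← smul_eq_C_mul]
      simp only [mul_add, mul_smul_comm, map_add, map_smul]
    have hr0 : r = 0 := by
      refine eq_zero_of_degree_lt_of_moments_eq_zero hP horth hdet n r hr fun j hj => ?_
      have := hW_split j
      rwa [hW j (by omega), horth j _ (by omega), horth j _ (by omega), smul_zero, smul_zero,
        add_zero, add_zero, eq_comm] at this
    have hvec : ![α, β] ᵥ* momentBlock W P n = 0 := by
      have := hW_split n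
      rw [hW n (by omega), hr0, mul_zero, map_zero, zero_add, eq_comm] at this
      rw [momentBlock, Matrix.vecMul_eq_sum, Fin.sum_univ_two]
      exact this
    have hαβ := Matrix.eq_zero_of_vecMul_eq_zero (hdet n) hvec
    have hα : α = 0 := by simpa using congr_fun hαβ 0
    have hβ : β = 0 := by simpa using congr_fun hαβ 1
    rw [hp_eq, hr0, hα, hβ]
    simp

theorem eq_zero_of_degree_le_of_moments_eq_zero
    (hP : ∀ M, (P M).Monic ∧ (P M).natDegree = M)
    (horth : ∀ j M, 2 * (j + 1) ≤ M → W (X ^ j * P M) = 0)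
    (hdet : ∀ m, (momentBlock W P m).det ≠ 0) (ℓ : K[X] →ₗ[K] K) {n : ℕ}
    (hℓ : ℓ (X ^ n * P (2 * n)) ≠ 0) {p : K[X]} (hp : p.degree < ((2 * n + 1 : ℕ) : WithBot ℕ))
    (hW : ∀ j < n, W (X ^ j * p) = 0) (hℓp : ℓ (X ^ n * p) = 0) : p = 0 := by
  set r := p - C (p.coeff (2 * n)) * P (2 * n)
  have hr0 : r = 0 := by
    refine eq_zero_of_degree_lt_of_moments_eq_zero W hP horth hdet n r
      (degree_sub_C_coeff_mul_lt (hP _).1 (hP _).2 (by exact_mod_cast hp)) fun j hj => ?_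
    rw [mul_sub, map_sub, hW j hj, mul_left_comm, ← smul_eq_C_mul, map_smul,
      horth j _ (by omega), smul_zero, sub_zero]
  have hp_eq : p = C (p.coeff (2 * n)) * P (2 * n) := sub_eq_zero.1 hr0
  rw [hp_eq, mul_left_comm, ← smul_eq_C_mul, map_smul, smul_eq_mul] at hℓp
  rw [hp_eq, (mul_eq_zero.1 hℓp).resolve_right hℓ, map_zero, zero_mul]

end Uniqueness

section CoeffDeriv

def HasCoeffDerivAt (F : ℝ → ℂ[X]) (F' : ℂ[X]) (t : ℝ) : Prop :=
  ∀ k, HasDerivAt (fun s => (F s).coeff k) (F'.coeff k) t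

variable {F G : ℝ → ℂ[X]} {F' G' : ℂ[X]} {t : ℝ}

theorem HasCoeffDerivAt.congr (hF : HasCoeffDerivAt F F' t) (hFG : ∀ s, F s = G s) :
    HasCoeffDerivAt G F' t :=
  funext hFG ▸ hF

theorem hasCoeffDerivAt_const (p : ℂ[X]) (t : ℝ) : HasCoeffDerivAt (fun _ => p) 0 t :=
  fun k => by simpa using hasDerivAt_const t (p.coeff k)

theorem HasCoeffDerivAt.sub (hF : HasCoeffDerivAt F F' t) (hG : HasCoeffDerivAt G G' t) :
    HasCoeffDerivAt (fun s => F s - G s) (F' - G') t :=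
  fun k => by simpa using (hF k).fun_sub (hG k)

theorem HasCoeffDerivAt.C_mul {f : ℝ → ℂ} {f' : ℂ} (hf : HasDerivAt f f' t)
    (hF : HasCoeffDerivAt F F' t) :
    HasCoeffDerivAt (fun s => C (f s) * F s) (C f' * F t + C (f t) * F') t :=
  fun k => by simpa using hf.fun_mul (hF k)

theorem HasCoeffDerivAt.X_pow_mul (j : ℕ) (hF : HasCoeffDerivAt F F' t) :
    HasCoeffDerivAt (fun s => X ^ j * F s) (X ^ j * F') t := by
  intro k
  simp only [coeff_X_pow_mul']
  split_ifs
  · exact hF _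
  · exact hasDerivAt_const t 0

theorem HasCoeffDerivAt.coeff_eq_zero_of_const (hF : HasCoeffDerivAt F F' t) {k : ℕ} {v : ℂ}
    (hk : ∀ s, (F s).coeff k = v) : F'.coeff k = 0 :=
  (hF k).unique (by simpa [hk] using hasDerivAt_const t v)

variable {E : Type*} [NormedAddCommGroup E] [NormedSpace ℂ E] {L : ℝ → ℂ[X] →ₗ[ℂ] E}

theorem HasCoeffDerivAt.hasDerivAt_apply {L' : ℂ[X] →ₗ[ℂ] E}
    (hL : ∀ p, HasDerivAt (fun s => L s p) (L' p) t) (hF : HasCoeffDerivAt F F' t) {N : ℕ}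
    (hN : ∀ s, (F s).natDegree < N) :
    HasDerivAt (fun s => L s (F s)) (L' (F t) + L t F') t := by
  have expand (T : ℂ[X] →ₗ[ℂ] E) (p : ℂ[X]) (hp : p.natDegree < N) :
      T p = ∑ k ∈ Finset.range N, p.coeff k • T (X ^ k) := by
    conv_lhs => rw [p.as_sum_range' N hp]
    simp [map_sum, ← C_mul_X_pow_eq_monomial, ← smul_eq_C_mul]
  have hF' : F'.natDegree < N := by
    obtain ⟨N, rfl⟩ : ∃ N', N = N' + 1 := ⟨N - 1, by have := hN t; omega⟩
    exact Nat.lt_succ_of_le (natDegree_le_iff_coeff_eq_zero.2 fun k hk =>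
      hF.coeff_eq_zero_of_const fun s => coeff_eq_zero_of_natDegree_lt (by have := hN s; omega))
  have hsum := HasDerivAt.fun_sum (u := Finset.range N) fun k _ => (hF k).smul (hL (X ^ k))
  rw [expand L' _ (hN t), expand (L t) _ hF', ← Finset.sum_add_distrib]
  exact hsum.congr_of_eventuallyEq (.of_forall fun s => expand (L s) _ (hN s))

theorem HasCoeffDerivAt.apply_eq_neg_of_apply_eq_zero (Φ : E →ₗ[ℂ] E)
    (hL : ∀ p, HasDerivAt (fun s => L s p) (L t (X * p) - Φ (L t p)) t)
    (hF : HasCoeffDerivAt F F' t) {N : ℕ} (hN : ∀ s, (F s).natDegree < N)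
    (h0 : ∀ s, L s (F s) = 0) : L t F' = -L t (X * F t) := by
  have hL' (p : ℂ[X]) : HasDerivAt (fun s => L s p)
      ((L t ∘ₗ LinearMap.mulLeft ℂ X - Φ ∘ₗ L t) p) t := by simpa using hL p
  have hderiv := hF.hasDerivAt_apply hL' hN
  simp only [h0] at hderiv
  have hzero := hderiv.unique (hasDerivAt_const t 0)
  simp only [LinearMap.sub_apply, LinearMap.comp_apply, LinearMap.mulLeft_apply, h0 t,
    map_zero, sub_zero] at hzero
  exact eq_neg_of_add_eq_zero_right hzero

end CoeffDeriv

section PauxFlow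

variable {a b c : ℕ → ℝ → ℂ} {t : ℝ}

theorem exists_hasCoeffDerivAt_Paux
    (ha : ∀ n, DifferentiableAt ℝ (a n) t) (hb : ∀ n, DifferentiableAt ℝ (b n) t)
    (hc : ∀ n, DifferentiableAt ℝ (c n) t) :
    ∀ M, ∃ D, HasCoeffDerivAt (fun s => Paux (a · s) (b · s) (c · s) M) D t
  | 0 => ⟨0, hasCoeffDerivAt_const 0 t⟩
  | 1 => ⟨0, hasCoeffDerivAt_const 0 t⟩
  | 2 => ⟨0, hasCoeffDerivAt_const 1 t⟩
  | M + 3 => by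
    obtain ⟨D₂, hD₂⟩ := exists_hasCoeffDerivAt_Paux ha hb hc (M + 2)
    obtain ⟨D₁, hD₁⟩ := exists_hasCoeffDerivAt_Paux ha hb hc (M + 1)
    obtain ⟨D₀, hD₀⟩ := exists_hasCoeffDerivAt_Paux ha hb hc M
    refine ⟨_, ((((hD₂.X_pow_mul 1).sub (.C_mul (ha (M + 1)).hasDerivAt hD₂)).sub
      (.C_mul (hb M).hasDerivAt hD₁)).sub (.C_mul (hc (M - 1)).hasDerivAt hD₀)).congr
      fun s => ?_⟩
    rw [Paux]
    ring

theorem HasCoeffDerivAt.degree_sub_Ptail_lt {M : ℕ} {D : ℂ[X]}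
    (hD : HasCoeffDerivAt (fun s => Paux (a · s) (b · s) (c · s) (M + 2)) D t) :
    (D - Ptail (a · t) (b · t) (c · t) M).degree < M := by
  refine (degree_lt_iff_coeff_zero _ _).2 fun k hk => ?_
  have hk : M ≤ k := by exact_mod_cast hk
  rw [coeff_sub, coeff_Ptail_of_le hk, sub_zero]
  rcases hk.eq_or_lt with rfl | hlt
  · exact hD.coeff_eq_zero_of_const fun s => coeff_Paux_add_two_self
  · exact hD.coeff_eq_zero_of_const fun s => coeff_Paux_of_lt (by omega)

/-- Differentiate `L s (X ^ j * P_M) = 0` and rewrite `X * P_M` by the recurrence. -/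
theorem apply_X_pow_mul_sub_Ptail_eq_zero {E : Type*} [NormedAddCommGroup E] [NormedSpace ℂ E]
    {L : ℝ → ℂ[X] →ₗ[ℂ] E} (Φ : E →ₗ[ℂ] E)
    (hL : ∀ p, HasDerivAt (fun s => L s p) (L t (X * p) - Φ (L t p)) t) {M j : ℕ} {D : ℂ[X]}
    (hD : HasCoeffDerivAt (fun s => Paux (a · s) (b · s) (c · s) (M + 2)) D t)
    (h0 : ∀ s, L s (X ^ j * Paux (a · s) (b · s) (c · s) (M + 2)) = 0)
    (h1 : L t (X ^ j * Paux (a · t) (b · t) (c · t) (M + 3)) = 0) :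
    L t (X ^ j * (D - Ptail (a · t) (b · t) (c · t) M)) = 0 := by
  have hD' := (hD.X_pow_mul j).apply_eq_neg_of_apply_eq_zero Φ hL (N := j + M + 1)
    (fun s => natDegree_mul_le.trans_lt (by rw [natDegree_X_pow, natDegree_Paux]; omega)) h0
  have hrec : X * (X ^ j * Paux (a · t) (b · t) (c · t) (M + 2))
      = X ^ j * Paux (a · t) (b · t) (c · t) (M + 3)
        + a (M + 1) t • (X ^ j * Paux (a · t) (b · t) (c · t) (M + 2))
        - X ^ j * Ptail (a · t) (b · t) (c · t) M := by
    rw [Paux_add_three, smul_eq_C_mul]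
    ring
  rw [mul_sub, map_sub, hD', hrec, map_sub, map_add, map_smul, h1, h0 t]
  simp

end PauxFlow

section Rows

variable {R : Type*} [CommRing R]

def firstRow (V : (Fin 2 → R[X]) →ₗ[R] Matrix (Fin 2) (Fin 2) R) : R[X] →ₗ[R] (Fin 2 → R) where
  toFun p := V (Pi.single 0 p) 0
  map_add' p q := by rw [Pi.single_add, map_add]; rfl
  map_smul' e p := by rw [Pi.single_smul, map_smul]; rfl

theorem apply_eq_firstRow {V : (Fin 2 → R[X]) →ₗ[R] Matrix (Fin 2) (Fin 2) R}
    (hV : ∀ (A : Matrix (Fin 2) (Fin 2) R) Q, V (A.map C *ᵥ Q) = A * V Q)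
    (Q : Fin 2 → R[X]) (i : Fin 2) : V Q i = firstRow V (Q i) := by
  have hsingle : (Matrix.single (0 : Fin 2) i (1 : R)).map C *ᵥ Q = Pi.single 0 (Q i) := by
    rw [Matrix.map_single, Matrix.single_mulVec, map_one, one_mul]
    rfl
  funext j
  have h := congr_fun (congr_fun (hV (Matrix.single 0 i 1) Q) 0) j
  rw [hsingle, Matrix.single_mul_apply_same, one_mul] at h
  exact h.symm

def dotFirstRow (V : (Fin 2 → R[X]) →ₗ[R] Matrix (Fin 2) (Fin 2) R) (v : Fin 2 → R) :
    R[X] →ₗ[R] R :=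
  dotProductEquiv R (Fin 2) v ∘ₗ firstRow V

theorem dotFirstRow_apply (V : (Fin 2 → R[X]) →ₗ[R] Matrix (Fin 2) (Fin 2) R) (v : Fin 2 → R)
    (p : R[X]) : dotFirstRow V v p = v ⬝ᵥ firstRow V p :=
  rfl

end Rows

section DotProductFlow

variable {ι : Type*} [Fintype ι] {t : ℝ}

theorem HasDerivAt.dotProduct {v w : ℝ → ι → ℂ} {v' w' : ι → ℂ}
    (hv : HasDerivAt v v' t) (hw : HasDerivAt w w' t) :
    HasDerivAt (fun s => v s ⬝ᵥ w s) (v' ⬝ᵥ w t + v t ⬝ᵥ w') t := by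
  rw [hasDerivAt_pi] at hv hw
  refine (HasDerivAt.fun_sum (u := Finset.univ) fun i _ => (hv i).mul (hw i)).congr_deriv ?_
  rw [Finset.sum_add_distrib]
  rfl

theorem hasDerivAt_dotProduct_of_flow {W : ℝ → ℂ[X] →ₗ[ℂ] (ι → ℂ)} {Ψ : Matrix ι ι ℂ}
    (hW : ∀ p, HasDerivAt (fun s => W s p) (W t (X * p) - W t p ᵥ* Ψ) t)
    {v : ℝ → ι → ℂ} {v' : ι → ℂ} {μ : ℂ} (hv : HasDerivAt v v' t)
    (hΨ : Ψ *ᵥ v t - v' = μ • v t) (p : ℂ[X]) :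
    HasDerivAt (fun s => v s ⬝ᵥ W s p) (v t ⬝ᵥ W t (X * p) - μ * (v t ⬝ᵥ W t p)) t := by
  refine (hv.dotProduct (hW p)).congr_deriv ?_
  rw [dotProduct_sub, dotProduct_comm (v t) (W t p ᵥ* Ψ), ← dotProduct_mulVec,
    eq_add_of_sub_eq hΨ, dotProduct_add, dotProduct_smul, dotProduct_comm v',
    dotProduct_comm (W t p) (v t), smul_eq_mul]
  ring

end DotProductFlow

section Moments

variable {a b c : ℕ → ℝ → ℂ} {U : ℝ → ((Fin 2 → ℂ[X]) →ₗ[ℂ] Matrix (Fin 2) (Fin 2) ℂ)} {t : ℝ}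

theorem Bvt_apply (m : ℕ) (i : Fin 2) :
    Bvt a b c t m i = Paux (a · t) (b · t) (c · t) (2 * m + i + 2) := by
  fin_cases i <;> rfl

theorem firstRow_X_pow_mul_Paux_eq_zero
    (hV : ∀ (A : Matrix (Fin 2) (Fin 2) ℂ) Q, U t (A.map C *ᵥ Q) = A * U t Q)
    (horth : ∀ m j : ℕ, j < m → U t (fun i => X ^ j * Bvt a b c t m i) = 0)
    (j M : ℕ) (h : 2 * (j + 1) ≤ M) :
    firstRow (U t) (X ^ j * Paux (a · t) (b · t) (c · t) (M + 2)) = 0 := by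
  obtain ⟨m, i, rfl, hj⟩ : ∃ (m : ℕ) (i : Fin 2), M = 2 * m + i ∧ j < m :=
    ⟨M / 2, ⟨M % 2, Nat.mod_lt _ two_pos⟩, by simp; omega, by omega⟩
  rw [← Bvt_apply, ← apply_eq_firstRow hV (fun i => X ^ j * Bvt a b c t m i), horth m j hj]
  rfl

theorem momentBlock_firstRow
    (hV : ∀ (A : Matrix (Fin 2) (Fin 2) ℂ) Q, U t (A.map C *ᵥ Q) = A * U t Q)
    (hmom : ∀ m : ℕ, U t (fun i => X ^ m * Bvt a b c t m i) = Cprod a b c t m) (m : ℕ) :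
    momentBlock (firstRow (U t)) (fun M => Paux (a · t) (b · t) (c · t) (M + 2)) m
      = Cprod a b c t m := by
  rw [← hmom m]
  ext i j
  rw [apply_eq_firstRow hV, Bvt_apply]
  fin_cases i <;> rfl

theorem det_Cprod_ne_zero (hcne : ∀ n : ℕ, 1 ≤ n → c n t ≠ 0) :
    ∀ m, (Cprod a b c t m).det ≠ 0
  | 0 => by simp [Cprod, Cblk, Matrix.det_fin_two_of]
  | m + 1 => by
    rw [Cprod, Matrix.det_mul, Cblk, if_neg m.succ_ne_zero, Matrix.det_fin_two_of]
    exact mul_ne_zero (by simpa using mul_ne_zero (hcne _ (by omega)) (hcne _ (by omega)))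
      (det_Cprod_ne_zero hcne m)

/-- `C₀` maps `(1, a₁)` to `(1, 0)`, which every upper triangular `C_n`, `n ≥ 1`, rescales. -/
theorem Cprod_mulVec (m : ℕ) :
    Cprod a b c t m *ᵥ ![1, a 1 t] = ![∏ k ∈ Finset.range m, c (2 * k + 1) t, 0] := by
  induction m with
  | zero => ext i; fin_cases i <;> simp [Cprod, Cblk, Matrix.mulVec, dotProduct]
  | succ m ih =>
    rw [Cprod, ← Matrix.mulVec_mulVec, ih, Cblk, if_neg m.succ_ne_zero, Finset.prod_range_succ,
      show 2 * (m + 1) - 1 = 2 * m + 1 by omega]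
    ext i; fin_cases i <;> simp [Matrix.mulVec, dotProduct, mul_comm]

theorem dotFirstRow_X_pow_mul_Paux
    (hV : ∀ (A : Matrix (Fin 2) (Fin 2) ℂ) Q, U t (A.map C *ᵥ Q) = A * U t Q)
    (hmom : ∀ m : ℕ, U t (fun i => X ^ m * Bvt a b c t m i) = Cprod a b c t m)
    (m : ℕ) (i : Fin 2) :
    dotFirstRow (U t) ![1, a 1 t] (X ^ m * Paux (a · t) (b · t) (c · t) (2 * m + i + 2))
      = ![∏ k ∈ Finset.range m, c (2 * k + 1) t, 0] i := by
  rw [dotFirstRow_apply, ← Bvt_apply, ← apply_eq_firstRow hV (fun i => X ^ m * Bvt a b c t m i),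
    hmom, dotProduct_comm, ← Cprod_mulVec]
  rfl

theorem dotFirstRow_X_pow_mul_Paux_ne_zero
    (hV : ∀ (A : Matrix (Fin 2) (Fin 2) ℂ) Q, U t (A.map C *ᵥ Q) = A * U t Q)
    (hmom : ∀ m : ℕ, U t (fun i => X ^ m * Bvt a b c t m i) = Cprod a b c t m)
    (hcne : ∀ n : ℕ, 1 ≤ n → c n t ≠ 0) (m : ℕ) :
    dotFirstRow (U t) ![1, a 1 t] (X ^ m * Paux (a · t) (b · t) (c · t) (2 * m + 2)) ≠ 0 := by
  have h := dotFirstRow_X_pow_mul_Paux hV hmom m 0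
  simp only [Fin.val_zero, add_zero, Matrix.cons_val_zero] at h
  rw [h, Finset.prod_ne_zero_iff]
  exact fun k _ => hcne _ (by omega)

theorem hasDerivAt_firstRow
    (hflow : ∀ (Q : Fin 2 → ℂ[X]) (t : ℝ) (i j : Fin 2),
      HasDerivAt (fun s => U s Q i j)
        ((U t (fun r => X * Q r) - U t Q * U t (fun r => X * P0vec r)) i j) t) (p : ℂ[X]) :
    HasDerivAt (fun s => firstRow (U s) p)
      (firstRow (U t) (X * p) - firstRow (U t) p ᵥ* U t (fun r => X * P0vec r)) t := by
  refine hasDerivAt_pi.2 fun j => ?_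
  have hXp : (fun r => X * (Pi.single 0 p : Fin 2 → ℂ[X]) r) = Pi.single 0 (X * p) := by
    funext r; fin_cases r <;> simp
  have h := hflow (Pi.single 0 p) t 0 j
  rw [hXp, Matrix.sub_apply, Matrix.mul_apply_eq_vecMul] at h
  exact h

theorem U_X_mul_P0vec_mulVec_sub_eq_smul
    (hV : ∀ (A : Matrix (Fin 2) (Fin 2) ℂ) Q, U t (A.map C *ᵥ Q) = A * U t Q)
    (horth : ∀ m j : ℕ, j < m → U t (fun i => X ^ j * Bvt a b c t m i) = 0)
    (hmom : ∀ m : ℕ, U t (fun i => X ^ m * Bvt a b c t m i) = Cprod a b c t m) :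
    U t (fun r => X * P0vec r) *ᵥ ![1, a 1 t] - ![0, b 1 t] = a 1 t • ![1, a 1 t] := by
  set ν := dotFirstRow (U t) ![1, a 1 t]
  set P := Paux (a · t) (b · t) (c · t)
  have h2 : ν (P 2) = 1 := by simpa using dotFirstRow_X_pow_mul_Paux hV hmom 0 0
  have h3 : ν (P 3) = 0 := by simpa using dotFirstRow_X_pow_mul_Paux hV hmom 0 1
  have h4 : ν (P 4) = 0 := by
    have := firstRow_X_pow_mul_Paux_eq_zero hV horth 0 2 le_rfl
    rw [pow_zero, one_mul] at this
    rw [dotFirstRow_apply, this, dotProduct_zero]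
  have hνX : ν X = a 1 t := by
    rw [show X = P 3 + C (a 1 t) * P 2 by simp [P, Paux], map_add, ← smul_eq_C_mul, map_smul,
      h2, h3, smul_eq_mul, mul_one, zero_add]
  have hνX2 : ν (X * X) = a 1 t ^ 2 + b 1 t := by
    rw [show X * X = P 4 + C (a 1 t + a 2 t) * P 3 + C (a 1 t ^ 2 + b 1 t) * P 2 by
        simp [P, Paux]; ring,
      map_add, map_add, ← smul_eq_C_mul, ← smul_eq_C_mul, map_smul, map_smul, h2, h3, h4]
    simp
  have hrow (i : Fin 2) : (U t (fun r => X * P0vec r) *ᵥ ![1, a 1 t]) i = ν (X * P0vec i) := by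
    change U t _ i ⬝ᵥ _ = _
    rw [apply_eq_firstRow hV, dotFirstRow_apply, dotProduct_comm]
  have h0 := hrow 0
  have h1 := hrow 1
  rw [show X * P0vec 0 = X by simp [P0vec], hνX] at h0
  rw [show X * P0vec 1 = X * X by simp [P0vec], hνX2] at h1
  ext i
  fin_cases i
  · simp only [Fin.zero_eta, Fin.isValue, Pi.sub_apply, h0]
    simp
  · simp only [Fin.mk_one, Fin.isValue, Pi.sub_apply, h1]
    simp
    ring

theorem hasDerivAt_dotFirstRow (ha1 : HasDerivAt (a 1) (b 1 t) t)
    (hV : ∀ (A : Matrix (Fin 2) (Fin 2) ℂ) Q, U t (A.map C *ᵥ Q) = A * U t Q)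
    (horth : ∀ m j : ℕ, j < m → U t (fun i => X ^ j * Bvt a b c t m i) = 0)
    (hmom : ∀ m : ℕ, U t (fun i => X ^ m * Bvt a b c t m i) = Cprod a b c t m)
    (hflow : ∀ (Q : Fin 2 → ℂ[X]) (t : ℝ) (i j : Fin 2),
      HasDerivAt (fun s => U s Q i j)
        ((U t (fun r => X * Q r) - U t Q * U t (fun r => X * P0vec r)) i j) t) (p : ℂ[X]) :
    HasDerivAt (fun s => dotFirstRow (U s) ![1, a 1 s] p)
      (dotFirstRow (U t) ![1, a 1 t] (X * p)
        - LinearMap.mulLeft ℂ (a 1 t) (dotFirstRow (U t) ![1, a 1 t] p)) t := by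
  have hv : HasDerivAt (fun s => ![1, a 1 s]) ![0, b 1 t] t := by
    refine hasDerivAt_pi.2 fun i => ?_
    fin_cases i
    · exact hasDerivAt_const t 1
    · exact ha1
  simpa only [dotFirstRow_apply, LinearMap.mulLeft_apply] using
    hasDerivAt_dotProduct_of_flow (hasDerivAt_firstRow hflow) hv
      (U_X_mul_P0vec_mulVec_sub_eq_smul hV horth hmom) p

end Moments

theorem neg_Cblk_mulVec_sub_Dblk_mulVec_apply {a b c : ℕ → ℝ → ℂ} {t : ℝ} (n : ℕ) (i : Fin 2) :
    (-((Cblk a b c n t).map C *ᵥ Bvtprev a b c t n) - (Dblk b n t).map C *ᵥ Bvt a b c t n) i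
      = Ptail (a · t) (b · t) (c · t) (2 * n + i) := by
  rcases n with _ | m <;> fin_cases i
  · simp [Cblk, Dblk, Bvtprev, Ptail, Paux]
  · simp [Cblk, Dblk, Bvtprev, Bvt, Bv, Pp, Ptail, Paux]
  all_goals
    simp [Cblk, Dblk, Bvtprev, Bvt, Bv, Pp, Ptail, mul_add, add_assoc]
    ring

theorem functional_evolution_implies_polynomial_evolution_general
    (a b c : ℕ → ℝ → ℂ)
    (hdiff : ∀ n, Differentiable ℝ (a n) ∧ Differentiable ℝ (b n) ∧ Differentiable ℝ (c n))
    (hcne : ∀ n : ℕ, 1 ≤ n → ∀ t : ℝ, c n t ≠ 0)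
    (ha1 : ∀ t : ℝ, HasDerivAt (a 1) (b 1 t) t)
    (U : ℝ → ((Fin 2 → Polynomial ℂ) →ₗ[ℂ] Matrix (Fin 2) (Fin 2) ℂ))
    (hM2 : ∀ t : ℝ, ∀ (A : Matrix (Fin 2) (Fin 2) ℂ) (Q : Fin 2 → Polynomial ℂ),
      U t (A.map C *ᵥ Q) = A * U t Q)
    (horth : ∀ t : ℝ, ∀ m j : ℕ, j < m → U t (fun i => X ^ j * Bvt a b c t m i) = 0)
    (hmom : ∀ t : ℝ, ∀ m : ℕ,
      U t (fun i => X ^ m * Bvt a b c t m i) = Cprod a b c t m)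
    (hflow : ∀ (Q : Fin 2 → Polynomial ℂ) (t : ℝ) (i j : Fin 2),
      HasDerivAt (fun s => U s Q i j)
        ((U t (fun r => X * Q r) - U t Q * U t (fun r => X * P0vec r)) i j) t) :
    ∀ n : ℕ, ∀ t : ℝ, ∀ i : Fin 2, ∀ k : ℕ,
      HasDerivAt (fun s => (Bvt a b c s n i).coeff k)
        (((-((Cblk a b c n t).map C *ᵥ Bvtprev a b c t n)
            - (Dblk b n t).map C *ᵥ Bvt a b c t n) i).coeff k) t := by
  intro n t i
  suffices h : ∀ r < 2, HasCoeffDerivAt (fun s => Paux (a · s) (b · s) (c · s) (2 * n + r + 2))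
      (Ptail (a · t) (b · t) (c · t) (2 * n + r)) t from fun k => by
    simpa only [Bvt_apply, neg_Cblk_mulVec_sub_Dblk_mulVec_apply] using h i i.isLt k
  intro r hr
  obtain ⟨D, hD⟩ := exists_hasCoeffDerivAt_Paux (fun n => (hdiff n).1 t) (fun n => (hdiff n).2.1 t)
    (fun n => (hdiff n).2.2 t) (2 * n + r + 2)
  suffices hD0 : D - Ptail (a · t) (b · t) (c · t) (2 * n + r) = 0 from sub_eq_zero.1 hD0 ▸ hD
  have hW_orth (s : ℝ) := firstRow_X_pow_mul_Paux_eq_zero (hM2 s) (horth s)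
  have hdet (m : ℕ) : (momentBlock (firstRow (U t))
      (fun M => Paux (a · t) (b · t) (c · t) (M + 2)) m).det ≠ 0 := by
    rw [momentBlock_firstRow (hM2 t) (hmom t)]
    exact det_Cprod_ne_zero (hcne · · t) m
  have htest (j : ℕ) (hj : j < n) :=
    apply_X_pow_mul_sub_Ptail_eq_zero (Matrix.vecMulLinear _) (hasDerivAt_firstRow hflow) hD
      (fun s => hW_orth s j _ (by omega)) (hW_orth t j _ (by omega))
  obtain rfl | rfl : r = 0 ∨ r = 1 := by omega
  · exact eq_zero_of_degree_lt_of_moments_eq_zero _ (fun M => ⟨monic_Paux M, natDegree_Paux M⟩)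
      (hW_orth t) hdet n _ hD.degree_sub_Ptail_lt htest
  refine eq_zero_of_degree_le_of_moments_eq_zero _ (fun M => ⟨monic_Paux M, natDegree_Paux M⟩)
    (hW_orth t) hdet _ (dotFirstRow_X_pow_mul_Paux_ne_zero (hM2 t) (hmom t) (hcne · · t) n)
    hD.degree_sub_Ptail_lt htest ?_
  refine apply_X_pow_mul_sub_Ptail_eq_zero _
    (hasDerivAt_dotFirstRow (ha1 t) (hM2 t) (horth t) (hmom t) hflow) hD
    (fun s => by simpa using dotFirstRow_X_pow_mul_Paux (hM2 s) (hmom s) n 1) ?_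
  rw [dotFirstRow_apply, hW_orth t n _ (by omega), dotProduct_zero]

/-- If the normalized vector of functionals evolves according to
`(dU/dt)(B) = U(zB) − U(B) U(z P₀)`, then the vector polynomials satisfy
`Ḃ_n = −C_n B_{n-1} − D_n B_n` (derivatives taken coefficientwise). -/
theorem functional_evolution_implies_polynomial_evolution
    (a b c : ℕ → ℝ → ℂ)
    (hdiff : ∀ n, Differentiable ℝ (a n) ∧ Differentiable ℝ (b n) ∧ Differentiable ℝ (c n))
    (hb0 : ∀ t, b 0 t = 0) (hc0 : ∀ t, c 0 t = 0)
    (hcne : ∀ n : ℕ, 1 ≤ n → ∀ t : ℝ, c n t ≠ 0)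
    (ha1 : ∀ t : ℝ, HasDerivAt (a 1) (b 1 t) t)
    (U : ℝ → ((Fin 2 → Polynomial ℂ) →ₗ[ℂ] Matrix (Fin 2) (Fin 2) ℂ))
    (hM2 : ∀ t : ℝ, ∀ (A : Matrix (Fin 2) (Fin 2) ℂ) (Q : Fin 2 → Polynomial ℂ),
      U t (A.map C *ᵥ Q) = A * U t Q)
    (horth : ∀ t : ℝ, ∀ m j : ℕ, j < m → U t (fun i => X ^ j * Bvt a b c t m i) = 0)
    (hmom : ∀ t : ℝ, ∀ m : ℕ,
      U t (fun i => X ^ m * Bvt a b c t m i) = Cprod a b c t m)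
    (hflow : ∀ (Q : Fin 2 → Polynomial ℂ) (t : ℝ) (i j : Fin 2),
      HasDerivAt (fun s => U s Q i j)
        ((U t (fun r => X * Q r) - U t Q * U t (fun r => X * P0vec r)) i j) t) :
    ∀ n : ℕ, ∀ t : ℝ, ∀ i : Fin 2, ∀ k : ℕ,
      HasDerivAt (fun s => (Bvt a b c s n i).coeff k)
        (((-((Cblk a b c n t).map C *ᵥ Bvtprev a b c t n)
            - (Dblk b n t).map C *ᵥ Bvt a b c t n) i).coeff k) t :=
  functional_evolution_implies_polynomial_evolution_general a b c hdiff hcne ha1 U hM2 horth hmom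
    hflow
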